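/- arXiv:math/0109160 — 2 statements merged into one kernel-verified Lean document; each statement's English description precedes it below -/
import Mathlib

section
/- Let G = N ⋊ K be an internal semidirect product (N normal in G, G = NK, N ∩ K = 1). If K is hypercentral and K is an Aut-basis of G, then G = N × K (i.e., K centralizes N) and |N| ≤ 2. -/
universe u

theorem Subgroup.normal_iSup_of_normal {G : Type u} [Group G] {ι : Sort*}
    (f : ι → Subgroup G) (h : ∀ i, (f i).Normal) : (⨆ i, f i).Normal := by
  constructor
  intro x hx g
  refine Subgroup.iSup_induction (C := fun y => g * y * g⁻¹ ∈ ⨆ i, f i) f hx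
    (fun i y hy => le_iSup f i ((h i).conj_mem y hy g)) (by simpa using Subgroup.one_mem _) ?_
  intro a b ha hb
  have hab : g * (a * b) * g⁻¹ = (g * a * g⁻¹) * (g * b * g⁻¹) := by group
  rw [hab]; exact mul_mem ha hb

/-- The transfinite upper central series of a group, as ordinal-indexed normal subgroups. -/
noncomputable def transUpperCentralSeriesAux (G : Type u) [Group G] :
    Ordinal.{u} → {H : Subgroup G // H.Normal} := fun o =>
  Ordinal.limitRecOn o
    ⟨⊥, inferInstance⟩
    (fun _ Z => ⟨@upperCentralSeriesStep G _ Z.1 Z.2, by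
      haveI := Z.2; show (Subgroup.upperCentralSeriesStep Z.1).Normal
      rw [Subgroup.upperCentralSeriesStep_eq_comap_center]; infer_instance⟩)
    (fun o _ ih => ⟨⨆ (o' : Ordinal.{u}) (ho' : o' < o), (ih o' ho').1,
      Subgroup.normal_iSup_of_normal _ fun o' =>
        Subgroup.normal_iSup_of_normal _ fun ho' => (ih o' ho').2⟩)

/-- The transfinite upper central series. -/
noncomputable def transUpperCentralSeries (G : Type u) [Group G] (o : Ordinal.{u}) :
    Subgroup G := (transUpperCentralSeriesAux G o).1

/-- The hypercentre of a group: the union of the transfinite upper central series. -/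
noncomputable def hypercenter (G : Type u) [Group G] : Subgroup G :=
  ⨆ o : Ordinal.{u}, transUpperCentralSeries G o

/-- A group is hypercentral if it equals the union of its transfinite upper central series. -/
def IsHypercentral (G : Type u) [Group G] : Prop := hypercenter G = ⊤

/-- The hypercentral length: the least ordinal `o` with `Z_o(G) = G`. -/
noncomputable def hypercentralLength (G : Type u) [Group G] : Ordinal.{u} :=
  sInf {o : Ordinal.{u} | transUpperCentralSeries G o = ⊤}

/-- A group is locally nilpotent if every finitely generated subgroup is nilpotent. -/
def IsLocallyNilpotent (G : Type*) [Group G] : Prop :=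
  ∀ S : Subgroup G, S.FG → Group.IsNilpotent S

/-! Write `G = N ⋊ K`. An automorphism `α` of `N` commuting with conjugation by every element
of `K` extends, by `n k ↦ α n * k`, to an automorphism of `G` fixing `K`; so when `K` is an
Aut-basis, every such `α` is trivial. Applied to conjugation by `z`, this says that `z`
centralizes `N` as soon as every commutator `⁅z, k⁆` with `k ∈ K` does, and transfinite
induction along the upper central series of `K` shows that the hypercentral group `K`
centralizes `N`. Then every automorphism of `N` is trivial: inner automorphisms and inversion
force `N` to be an `𝔽₂`-vector space, and two independent vectors could be swapped, so `N` has
at most two elements. -/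

open scoped commutatorElement

namespace Subgroup

variable {G : Type*} [Group G] {N K : Subgroup G} [N.Normal]

open Pointwise in
theorem isComplement'_of_sup_eq_top_of_inf_eq_bot (hjoin : N ⊔ K = ⊤) (hmeet : N ⊓ K = ⊥) :
    N.IsComplement' K :=
  isComplement'_of_disjoint_and_mul_eq_univ (disjoint_iff.mpr hmeet)
    (by rw [← normal_mul, hjoin, coe_top])

theorem conjNormal_eq_one_iff {g : G} :
    MulAut.conjNormal g = (1 : MulAut N) ↔ g ∈ centralizer (N : Set G) := by
  simp only [MulEquiv.ext_iff, Subtype.ext_iff, MulAut.conjNormal_apply, MulAut.one_apply,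
    mem_centralizer_iff, Subtype.forall, SetLike.mem_coe]
  exact forall₂_congr fun n _ => by rw [eq_comm, eq_mul_inv_iff_mul_eq, eq_comm]

noncomputable def IsComplement'.extendMulAut (h : N.IsComplement' K) (α : MulAut N)
    (hα : ∀ k ∈ K, Commute α (MulAut.conjNormal k)) : MulAut G :=
  ((SemidirectProduct.mulEquivSubgroup h).symm.trans
    (SemidirectProduct.congr α (MulEquiv.refl K) fun k => by
      ext n
      exact congrArg Subtype.val (DFunLike.congr_fun (hα k k.2) n))).trans
    (SemidirectProduct.mulEquivSubgroup h)

theorem IsComplement'.extendMulAut_apply_of_mem_right (h : N.IsComplement' K) (α : MulAut N)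
    (hα : ∀ k ∈ K, Commute α (MulAut.conjNormal k)) {k : G} (hk : k ∈ K) :
    h.extendMulAut α hα k = k := by
  have : (SemidirectProduct.mulEquivSubgroup h).symm k = SemidirectProduct.inr ⟨k, hk⟩ :=
    (MulEquiv.symm_apply_eq _).mpr (by simp)
  simp [extendMulAut, this]

theorem IsComplement'.extendMulAut_apply_coe (h : N.IsComplement' K) (α : MulAut N)
    (hα : ∀ k ∈ K, Commute α (MulAut.conjNormal k)) (n : N) :
    h.extendMulAut α hα n = α n := by
  have : (SemidirectProduct.mulEquivSubgroup h).symm n = SemidirectProduct.inl n :=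
    (MulEquiv.symm_apply_eq _).mpr (by simp)
  simp [extendMulAut, this]

def IsAutBasis (K : Subgroup G) : Prop :=
  ∀ φ : G ≃* G, (∀ k ∈ K, φ k = k) → ∀ g : G, φ g = g

theorem IsAutBasis.eq_one_of_forall_commute_conjNormal (hK : K.IsAutBasis)
    (h : N.IsComplement' K) {α : MulAut N} (hα : ∀ k ∈ K, Commute α (MulAut.conjNormal k)) :
    α = 1 := by
  ext n
  have := hK (h.extendMulAut α hα) (fun k hk => h.extendMulAut_apply_of_mem_right α hα hk) n
  rwa [h.extendMulAut_apply_coe] at this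

theorem IsAutBasis.mem_centralizer_of_forall_commutator_mem (hK : K.IsAutBasis)
    (h : N.IsComplement' K) {z : G} (hz : ∀ k ∈ K, ⁅z, k⁆ ∈ centralizer (N : Set G)) :
    z ∈ centralizer (N : Set G) := by
  rw [← conjNormal_eq_one_iff]
  refine hK.eq_one_of_forall_commute_conjNormal h fun k hk => ?_
  rw [← commutatorElement_eq_one_iff_commute, ← map_commutatorElement, conjNormal_eq_one_iff]
  exact hz k hk

theorem IsAutBasis.mulAut_eq_one_of_le_centralizer (hK : K.IsAutBasis) (h : N.IsComplement' K)
    (hKN : K ≤ centralizer (N : Set G)) (α : MulAut N) : α = 1 :=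
  hK.eq_one_of_forall_commute_conjNormal h fun k hk => by
    rw [conjNormal_eq_one_iff.mpr (hKN hk)]
    exact Commute.one_right α

end Subgroup

section TransUpperCentralSeries

variable {G : Type u} [Group G]

theorem transUpperCentralSeries_zero : transUpperCentralSeries G 0 = ⊥ := by
  rw [transUpperCentralSeries, transUpperCentralSeriesAux, Ordinal.limitRecOn_zero]

theorem mem_transUpperCentralSeries_add_one {o : Ordinal.{u}} {x : G} :
    x ∈ transUpperCentralSeries G (o + 1) ↔
      ∀ y, ⁅x, y⁆ ∈ transUpperCentralSeries G o := by
  rw [transUpperCentralSeries, transUpperCentralSeriesAux, Ordinal.limitRecOn_add_one]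
  exact Iff.rfl

theorem transUpperCentralSeries_of_isSuccLimit {o : Ordinal.{u}} (ho : Order.IsSuccLimit o) :
    transUpperCentralSeries G o =
      ⨆ (o' : Ordinal.{u}) (_ : o' < o), transUpperCentralSeries G o' := by
  rw [transUpperCentralSeries, transUpperCentralSeriesAux, Ordinal.limitRecOn_limit _ _ _ _ ho]
  rfl

theorem hypercenter_le_of_forall_commutator_mem {C : Subgroup G}
    (hC : ∀ x, (∀ y, ⁅x, y⁆ ∈ C) → x ∈ C) : hypercenter G ≤ C := by
  refine iSup_le fun o => ?_
  induction o using Ordinal.limitRecOn with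
  | zero => simp [transUpperCentralSeries_zero]
  | add_one o ih =>
    exact fun x hx => hC x fun y => ih (mem_transUpperCentralSeries_add_one.mp hx y)
  | limit o ho ih => exact (transUpperCentralSeries_of_isSuccLimit ho).trans_le (iSup₂_le ih)

end TransUpperCentralSeries

theorem LinearIndepOn.exists_linearEquiv_apply_eq {K V : Type*} [DivisionRing K]
    [AddCommGroup V] [Module K V] {a b : V} (h : LinearIndepOn K id {a, b}) :
    ∃ T : V ≃ₗ[K] V, T a = b := by
  classical
  let B := Module.Basis.extend h
  let ia : h.extend (Set.subset_univ _) := ⟨a, h.subset_extend _ (Set.mem_insert _ _)⟩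
  let ib : h.extend (Set.subset_univ _) := ⟨b, h.subset_extend _ (Set.mem_insert_of_mem _ rfl)⟩
  refine ⟨B.equiv B (Equiv.swap ia ib), ?_⟩
  have ha : B ia = a := Module.Basis.extend_apply_self h ia
  have hb : B ib = b := Module.Basis.extend_apply_self h ib
  have := B.equiv_apply ia B (Equiv.swap ia ib)
  rwa [Equiv.swap_apply_left, ha, hb] at this

theorem Cardinal.mk_le_two_of_forall_mulAut_eq_one {H : Type*} [Group H]
    (h : ∀ e : MulAut H, e = 1) : Cardinal.mk H ≤ 2 := by
  have hcomm : ∀ a b : H, a * b = b * a := fun a b => by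
    simpa [mul_inv_eq_iff_eq_mul] using DFunLike.congr_fun (h (MulAut.conj a)) b
  let _ : CommGroup H := { mul_comm := hcomm }
  have hsq : ∀ x : H, x ^ 2 = 1 := fun x => by
    have hinv : x⁻¹ = x := DFunLike.congr_fun (h (MulEquiv.inv H)) x
    rw [sq]
    nth_rw 1 [← hinv]
    exact inv_mul_cancel x
  let _ : Module (ZMod 2) (Additive H) := AddCommGroup.zmodModule fun x => hsq x.toMul
  have hpair : ∀ a b : H, a ≠ 1 → b ≠ 1 → a = b := by
    intro a b ha hb
    by_contra hab
    have hli : LinearIndepOn (ZMod 2) id {Additive.ofMul a, Additive.ofMul b} :=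
      linearIndepOn_id_pair ha fun c => by
        rcases (by decide : ∀ c : ZMod 2, c = 0 ∨ c = 1) c with rfl | rfl
        · rw [zero_smul]
          exact fun h0 => hb h0.symm
        · rw [one_smul]
          exact hab
    obtain ⟨T, hT⟩ := hli.exists_linearEquiv_apply_eq
    have hfix : T (Additive.ofMul a) = Additive.ofMul a :=
      DFunLike.congr_fun (h (MulEquiv.toAdditive.symm T.toAddEquiv)) a
    exact hab (hfix.symm.trans hT)
  calc Cardinal.mk H = Cardinal.mk ({1} : Set H) + Cardinal.mk ({1}ᶜ : Set H) :=
        (Cardinal.mk_sum_compl _).symm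
    _ ≤ 1 + 1 := add_le_add (Cardinal.mk_singleton _).le
        (Cardinal.mk_le_one_iff_set_subsingleton.mpr fun a ha b hb => hpair a b ha hb)
    _ = 2 := one_add_one_eq_two

/-- Let `G = N ⋊ K` be an internal semidirect product.  If `K` is hypercentral and `K` is
an Aut-basis of `G`, then `G = N × K` (i.e. `K` centralizes `N`) and `|N| ≤ 2`. -/
theorem autBasis_complement_centralizes {G : Type u} [Group G]
    (N K : Subgroup G) [N.Normal] (hjoin : N ⊔ K = ⊤) (hmeet : N ⊓ K = ⊥)
    (hhyp : IsHypercentral K)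
    (hbasis : ∀ φ : G ≃* G, (∀ k ∈ K, φ k = k) → ∀ g : G, φ g = g) :
    (∀ n ∈ N, ∀ k ∈ K, n * k = k * n) ∧ Cardinal.mk N ≤ 2 := by
  have hc := Subgroup.isComplement'_of_sup_eq_top_of_inf_eq_bot hjoin hmeet
  have hK : K.IsAutBasis := hbasis
  have hZ : hypercenter K ≤ (Subgroup.centralizer (N : Set G)).comap K.subtype :=
    hypercenter_le_of_forall_commutator_mem fun z hz =>
      hK.mem_centralizer_of_forall_commutator_mem hc fun k hk => by
        simpa only [Subgroup.mem_comap, map_commutatorElement, Subgroup.coe_subtype]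
          using hz ⟨k, hk⟩
  have hKN : K ≤ Subgroup.centralizer (N : Set G) := fun k hk =>
    hZ (hhyp ▸ Subgroup.mem_top (⟨k, hk⟩ : K))
  exact ⟨fun n hn k hk => Subgroup.mem_centralizer_iff.mp (hKN hk) n hn,
    Cardinal.mk_le_two_of_forall_mulAut_eq_one (hK.mulAut_eq_one_of_le_centralizer hc hKN)⟩
end

section
/- Let H be a subgroup of a locally nilpotent group G. Then either G = I_G(H), the isolator of H in G, or there is an infinite cyclic section between H and G, i.e., there exist subgroups V ⊴ U of G with H ≤ V and U/V infinite cyclic. -/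
universe u

/-!
Suppose some `x` has no positive power in `H`, and let `U = ⟨H, x⟩`, `V = H[U, U] ≤ U`. Then
`U/V` is abelian and generated by the image of `x`, hence cyclic; it remains to see that it is
infinite, i.e. that no `x ^ n` with `n > 0` lies in `H[U, U]`.

Such a relation involves only finitely many elements of `H`, so it already holds in
`F = ⟨K, x⟩` for a finitely generated `K ≤ H`, with `x ^ n ∈ K[F, F]`; and `F` is nilpotent.
Then `F / K[F, F]` is finite cyclic, so every element of `F` has a positive power in `K[F, F]`.
In a nilpotent group this forces every element to have a positive power in `K` itself: by
induction on the class, pass to the quotient by the last nontrivial term `γ` of the lower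
central series. The generators `⁅a, b⁆` of `γ` are central and the commutator is bilinear on
them, so writing `a ^ j = h₁ c₁`, `b ^ k = h₂ c₂` with `hᵢ ∈ K` and `cᵢ ∈ γ` gives
`⁅a, b⁆ ^ (j * k) = ⁅h₁, h₂⁆ ∈ K`.
-/

open Subgroup

open scoped commutatorElement

section Commutator

variable {G : Type*} [Group G] {a b c : G}

theorem commutatorElement_mul_right_of_mem_center (hc : c ∈ center G) :
    ⁅a, b * c⁆ = ⁅a, b⁆ := by
  rw [commutatorElement_mul_right_eq_mul_conj,
    commutatorElement_eq_one_iff_commute.mpr (mem_center_iff.mp hc a)]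
  group

theorem commutatorElement_mul_left_of_mem_center (hc : c ∈ center G) :
    ⁅a * c, b⁆ = ⁅a, b⁆ := by
  rw [mem_center_iff.mp hc a, commutatorElement_mul_left_eq_conj_mul,
    commutatorElement_eq_one_iff_commute.mpr (mem_center_iff.mp hc b).symm,
    ← mem_center_iff.mp hc]
  group

theorem commutatorElement_pow_right_of_mem_center (h : ⁅a, b⁆ ∈ center G) (k : ℕ) :
    ⁅a, b ^ k⁆ = ⁅a, b⁆ ^ k := by
  induction k with
  | zero => simp
  | succ k ih =>
    rw [pow_succ, commutatorElement_mul_right_eq_mul_conj, ih, mul_assoc _ (b ^ k),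
      mem_center_iff.mp h, pow_succ]
    group

theorem commutatorElement_pow_left_of_mem_center (h : ⁅a, b⁆ ∈ center G) (j : ℕ) :
    ⁅a ^ j, b⁆ = ⁅a, b⁆ ^ j := by
  induction j with
  | zero => simp
  | succ j ih =>
    rw [pow_succ', commutatorElement_mul_left_eq_conj_mul, ih,
      mem_center_iff.mp (pow_mem h j) a, pow_succ]
    group

theorem commutatorElement_pow_pow_of_mem_center (h : ⁅a, b⁆ ∈ center G) (j k : ℕ) :
    ⁅a ^ j, b ^ k⁆ = ⁅a, b⁆ ^ (j * k) := by
  have hk := commutatorElement_pow_right_of_mem_center h k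
  rw [commutatorElement_pow_left_of_mem_center (hk ▸ pow_mem h k), hk, ← pow_mul, mul_comm]

end Commutator

namespace Subgroup

variable {G : Type*} [Group G]

def isolator (H : Subgroup G) : Set G :=
  {g | ∃ n : ℕ, 0 < n ∧ g ^ n ∈ H}

variable {H K : Subgroup G} {g : G}

theorem isolator_mono (hHK : H ≤ K) : H.isolator ⊆ K.isolator :=
  fun _ ⟨n, hn, hgn⟩ => ⟨n, hn, hHK hgn⟩

theorem subset_isolator : (H : Set G) ⊆ H.isolator :=
  fun g hg => ⟨1, one_pos, by rwa [pow_one]⟩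

theorem inv_mem_isolator (hg : g ∈ H.isolator) : g⁻¹ ∈ H.isolator := by
  obtain ⟨n, hn, hgn⟩ := hg
  exact ⟨n, hn, by rw [inv_pow]; exact H.inv_mem hgn⟩

theorem mem_isolator_of_pow_mem_isolator {k : ℕ} (hk : 0 < k) (hg : g ^ k ∈ H.isolator) :
    g ∈ H.isolator := by
  obtain ⟨n, hn, hgn⟩ := hg
  exact ⟨k * n, Nat.mul_pos hk hn, by rwa [pow_mul]⟩

theorem mul_mem_isolator_of_commute {a b : G} (hab : Commute a b) (ha : a ∈ H.isolator)
    (hb : b ∈ H.isolator) : a * b ∈ H.isolator := by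
  obtain ⟨p, hp, hap⟩ := ha
  obtain ⟨q, hq, hbq⟩ := hb
  refine ⟨p * q, Nat.mul_pos hp hq, ?_⟩
  rw [hab.mul_pow, pow_mul, mul_comm p q, pow_mul]
  exact H.mul_mem (pow_mem hap q) (pow_mem hbq p)

theorem mem_isolator_iff_isOfFinOrder [H.Normal] :
    g ∈ H.isolator ↔ IsOfFinOrder (g : G ⧸ H) := by
  simp only [isolator, Set.mem_ofPred_eq, isOfFinOrder_iff_pow_eq_one, ← QuotientGroup.mk_pow,
    QuotientGroup.eq_one_iff]

theorem mem_isolator_map_iff {N : Type*} [Group N] (f : G →* N) :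
    f g ∈ (H.map f).isolator ↔ g ∈ (H ⊔ f.ker).isolator := by
  simp only [isolator, Set.mem_ofPred_eq, ← map_pow, ← mem_comap, comap_map_eq]

def centralIsolator (H : Subgroup G) : Subgroup G where
  carrier := center G ∩ H.isolator
  one_mem' := ⟨one_mem _, subset_isolator H.one_mem⟩
  mul_mem' ha hb :=
    ⟨mul_mem ha.1 hb.1, mul_mem_isolator_of_commute (mem_center_iff.mp hb.1 _) ha.2 hb.2⟩
  inv_mem' ha := ⟨inv_mem ha.1, inv_mem_isolator ha.2⟩

theorem isolator_eq_univ_of_isolator_sup_central_commutator {M N : Subgroup G}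
    (hc : ⁅M, N⁆ ≤ center G) (h : (H ⊔ ⁅M, N⁆).isolator = Set.univ) :
    H.isolator = Set.univ := by
  have : ⁅M, N⁆.Normal :=
    ⟨fun c hc' g => by rwa [mem_center_iff.mp (hc hc') g, mul_inv_cancel_right]⟩
  have decomp (g : G) : ∃ k, 0 < k ∧ ∃ h ∈ H, ∃ c ∈ ⁅M, N⁆, h * c = g ^ k := by
    obtain ⟨k, hk, hgk⟩ := h.symm ▸ Set.mem_univ g
    exact ⟨k, hk, mem_sup_of_normal_right.mp hgk⟩
  have hle : ⁅M, N⁆ ≤ H.centralIsolator := by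
    rw [commutator_le]
    intro a ha b hb
    have hab : ⁅a, b⁆ ∈ center G := hc (commutator_mem_commutator ha hb)
    obtain ⟨j, hj, h₁, hh₁, c₁, hc₁, ha'⟩ := decomp a
    obtain ⟨k, hk, h₂, hh₂, c₂, hc₂, hb'⟩ := decomp b
    refine ⟨hab, j * k, Nat.mul_pos hj hk, ?_⟩
    rw [← commutatorElement_pow_pow_of_mem_center hab, ← ha', ← hb',
      commutatorElement_mul_right_of_mem_center (hc hc₂),
      commutatorElement_mul_left_of_mem_center (hc hc₁), commutatorElement_def]
    exact mul_mem (mul_mem (mul_mem hh₁ hh₂) (inv_mem hh₁)) (inv_mem hh₂)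
  refine Set.eq_univ_of_forall fun g => ?_
  obtain ⟨k, hk, h₀, hh₀, c, hc₀, hg⟩ := decomp g
  exact mem_isolator_of_pow_mem_isolator hk <| hg ▸ mul_mem_isolator_of_commute
    (mem_center_iff.mp (hc hc₀) h₀) (subset_isolator hh₀) (hle hc₀).2

theorem isolator_eq_univ_of_lowerCentralSeries_eq_bot {n : ℕ}
    (hn : (⊤ : Subgroup G).lowerCentralSeries (n + 1) = ⊥)
    (h : (H ⊔ _root_.commutator G).isolator = Set.univ) : H.isolator = Set.univ := by
  induction n generalizing G with
  | zero => rwa [← top_lowerCentralSeries_one, hn, sup_bot_eq] at h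
  | succ n ih =>
    set N := (⊤ : Subgroup G).lowerCentralSeries (n + 1)
    have hsurj := QuotientGroup.mk'_surjective N
    have hQ : (⊤ : Subgroup (G ⧸ N)).lowerCentralSeries (n + 1) = ⊥ := by
      rw [← map_top_of_surjective _ hsurj, ← map_lowerCentralSeries, map_eq_bot_iff,
        QuotientGroup.ker_mk']
    have hHQ :
        (H.map (QuotientGroup.mk' N) ⊔ _root_.commutator (G ⧸ N)).isolator = Set.univ := by
      refine Set.eq_univ_of_forall fun q => ?_
      obtain ⟨g, rfl⟩ := hsurj q
      rw [_root_.commutator_def, ← map_top_of_surjective _ hsurj, ← map_commutator, ← map_sup,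
        mem_isolator_map_iff]
      exact isolator_mono le_sup_left (h.symm ▸ Set.mem_univ g)
    refine isolator_eq_univ_of_isolator_sup_central_commutator
      (commutator_top_right_eq_bot_iff_le_center.mp hn) (Set.eq_univ_of_forall fun g => ?_)
    change g ∈ (H ⊔ N).isolator
    rw [← QuotientGroup.ker_mk' N, ← mem_isolator_map_iff, ih hQ hHQ]
    exact Set.mem_univ _

theorem isolator_eq_univ_of_isolator_sup_commutator_eq_univ [Group.IsNilpotent G]
    (h : (H ⊔ _root_.commutator G).isolator = Set.univ) : H.isolator = Set.univ := by
  obtain ⟨n, hn⟩ := nilpotent_iff_lowerCentralSeries.mp ‹_›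
  exact isolator_eq_univ_of_lowerCentralSeries_eq_bot
    (eq_bot_iff.mpr (hn ▸ lowerCentralSeries_antitone _ n.le_succ)) h

theorem zpowers_mk_eq_top {W : Subgroup G} [W.Normal] {x : G} (hKW : K ≤ W)
    (hK : K ⊔ zpowers x = ⊤) : zpowers (x : G ⧸ W) = ⊤ :=
  calc zpowers (x : G ⧸ W) = (K ⊔ zpowers x).map (QuotientGroup.mk' W) := by
        rw [map_sup, (map_eq_bot_iff _).mpr (by rwa [QuotientGroup.ker_mk']), bot_sup_eq,
          MonoidHom.map_zpowers]
        rfl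
    _ = ⊤ := by rw [hK, map_top_of_surjective _ (QuotientGroup.mk'_surjective W)]

theorem isolator_eq_univ_of_sup_zpowers_eq_top {W : Subgroup G} [W.Normal] {x : G}
    (hKW : K ≤ W) (hK : K ⊔ zpowers x = ⊤) (hx : x ∈ W.isolator) :
    W.isolator = Set.univ := by
  refine Set.eq_univ_of_forall fun g => ?_
  obtain ⟨i, hi⟩ :=
    mem_zpowers_iff.mp ((zpowers_mk_eq_top hKW hK).symm ▸ mem_top (g : G ⧸ W))
  rw [mem_isolator_iff_isOfFinOrder] at hx ⊢
  exact hi ▸ hx.zpow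

theorem subgroupOf_sup_zpowers_eq_top (H : Subgroup G) (x : G) :
    H.subgroupOf (H ⊔ zpowers x) ⊔ zpowers ⟨x, mem_sup_right (mem_zpowers x)⟩ = ⊤ := by
  rw [← map_subtype_inj, map_sup, subgroupOf_map_subtype, MonoidHom.map_zpowers,
    ← MonoidHom.range_eq_map, range_subtype, inf_of_le_left le_sup_left]
  rfl

theorem mem_isolator_subgroupOf_sup_commutator_iff {U : Subgroup G} (hHU : H ≤ U) {u : U} :
    u ∈ (H.subgroupOf U ⊔ _root_.commutator U).isolator ↔
      (u : G) ∈ (H ⊔ ⁅U, U⁆).isolator := by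
  have hmap : H ⊔ ⁅U, U⁆ = (H.subgroupOf U ⊔ _root_.commutator U).map U.subtype := by
    rw [map_sup, subgroupOf_map_subtype, inf_of_le_left hHU, map_subtype_commutator]
  rw [hmap, ← U.coe_subtype, mem_isolator_map_iff, ker_subtype, sup_bot_eq]

theorem mem_isolator_of_mem_isolator_sup_commutator {x : G}
    [Group.IsNilpotent (H ⊔ zpowers x : Subgroup G)]
    (hx : x ∈ (H ⊔ ⁅H ⊔ zpowers x, H ⊔ zpowers x⁆).isolator) : x ∈ H.isolator := by
  set U := H ⊔ zpowers x
  have : (H.subgroupOf U ⊔ _root_.commutator U).Normal :=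
    Normal.of_commutator_le (G := U) le_sup_right
  have hV : (H.subgroupOf U ⊔ _root_.commutator U).isolator = Set.univ :=
    isolator_eq_univ_of_sup_zpowers_eq_top le_sup_left (subgroupOf_sup_zpowers_eq_top H x)
      ((mem_isolator_subgroupOf_sup_commutator_iff le_sup_left).mpr hx)
  obtain ⟨n, hn, hxn⟩ :
      (⟨x, mem_sup_right (mem_zpowers x)⟩ : U) ∈ (H.subgroupOf U).isolator := by
    rw [isolator_eq_univ_of_isolator_sup_commutator_eq_univ hV]
    trivial
  exact ⟨n, hn, mem_subgroupOf.mp hxn⟩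

theorem commutator_iSup_le_of_directed {ι : Type*} [Nonempty ι] {A : ι → Subgroup G}
    (hA : Directed (· ≤ ·) A) : ⁅⨆ i, A i, ⨆ i, A i⁆ ≤ ⨆ i, ⁅A i, A i⁆ := by
  rw [commutator_le]
  intro a ha b hb
  obtain ⟨i, hai⟩ := (mem_iSup_of_directed hA).mp ha
  obtain ⟨j, hbj⟩ := (mem_iSup_of_directed hA).mp hb
  obtain ⟨k, hik, hjk⟩ := hA i j
  exact mem_iSup_of_mem k (commutator_mem_commutator (hik hai) (hjk hbj))

theorem exists_fg_le_mem_sup_commutator_sup_zpowers {x y : G}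
    (hy : y ∈ H ⊔ ⁅H ⊔ zpowers x, H ⊔ zpowers x⁆) :
    ∃ K ≤ H, K.FG ∧ y ∈ K ⊔ ⁅K ⊔ zpowers x, K ⊔ zpowers x⁆ := by
  classical
  let A (T : Finset H) : Subgroup G := closure (T.map (Function.Embedding.subtype _))
  have hA : Monotone A := fun T T' h =>
    closure_mono (Finset.coe_subset.mpr (Finset.map_subset_map.mpr h))
  have hAH (T : Finset H) : A T ≤ H := (closure_le H).mpr <| by
    rw [Finset.coe_map]
    rintro _ ⟨h, -, rfl⟩
    exact h.2
  have hHA : H ≤ ⨆ T, A T := fun h hh =>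
    mem_iSup_of_mem {⟨h, hh⟩} (subset_closure (by simp))
  have hU : H ⊔ zpowers x ≤ ⨆ T, (A T ⊔ zpowers x) :=
    sup_le (hHA.trans (iSup_mono fun _ => le_sup_left)) (le_iSup_of_le ∅ le_sup_right)
  have hle : H ⊔ ⁅H ⊔ zpowers x, H ⊔ zpowers x⁆ ≤
      ⨆ T, (A T ⊔ ⁅A T ⊔ zpowers x, A T ⊔ zpowers x⁆) :=
    sup_le (hHA.trans (iSup_mono fun _ => le_sup_left))
      ((commutator_mono hU hU).trans <|
        (commutator_iSup_le_of_directed (hA.sup monotone_const).directed_le).trans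
          (iSup_mono fun _ => le_sup_right))
  have hmono : Monotone fun T => A T ⊔ ⁅A T ⊔ zpowers x, A T ⊔ zpowers x⁆ :=
    fun T T' h => sup_le_sup (hA h)
      (commutator_mono (sup_le_sup_right (hA h) _) (sup_le_sup_right (hA h) _))
  obtain ⟨T, hT⟩ := (mem_iSup_of_directed hmono.directed_le).mp (hle hy)
  exact ⟨A T, hAH T, ⟨_, rfl⟩, hT⟩

end Subgroup

theorem IsLocallyNilpotent.mem_isolator_of_mem_isolator_sup_commutator {G : Type*} [Group G]
    (hG : IsLocallyNilpotent G) {H : Subgroup G} {x : G}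
    (hx : x ∈ (H ⊔ ⁅H ⊔ zpowers x, H ⊔ zpowers x⁆).isolator) : x ∈ H.isolator := by
  obtain ⟨n, hn, hxn⟩ := hx
  obtain ⟨K, hKH, hK, hxK⟩ := exists_fg_le_mem_sup_commutator_sup_zpowers hxn
  have := hG _ (hK.sup (⟨{x}, by rw [Finset.coe_singleton, zpowers_eq_closure]⟩ :
    (zpowers x).FG))
  exact isolator_mono hKH (Subgroup.mem_isolator_of_mem_isolator_sup_commutator ⟨n, hn, hxK⟩)

/-- Let `H` be a subgroup of a locally nilpotent group `G`.  Then either `G = I_G(H)`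
(every element of `G` has a positive power in `H`), or there is an infinite cyclic
section between `H` and `G`. -/
theorem isolator_eq_top_or_infinite_cyclic_section {G : Type u} [Group G]
    (hG : IsLocallyNilpotent G) (H : Subgroup G) :
    (∀ g : G, ∃ n : ℕ, 0 < n ∧ g ^ n ∈ H) ∨
      (∃ (U : Subgroup G) (V : Subgroup U) (hn : V.Normal), H ≤ U ∧ H.subgroupOf U ≤ V ∧
        (letI : V.Normal := hn
         IsCyclic (U ⧸ V) ∧ Infinite (U ⧸ V))) := by
  refine or_iff_not_imp_left.mpr fun hH => ?_
  obtain ⟨x, hx⟩ : ∃ x, x ∉ H.isolator := not_forall.mp hH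
  set U := H ⊔ zpowers x
  have hV : (H.subgroupOf U ⊔ commutator U).Normal :=
    Normal.of_commutator_le (G := U) le_sup_right
  refine ⟨U, _, hV, le_sup_left, le_sup_left, ?_, ?_⟩
  · exact isCyclic_iff_exists_zpowers_eq_top.mpr
      ⟨_, zpowers_mk_eq_top le_sup_left (subgroupOf_sup_zpowers_eq_top H x)⟩
  · refine not_finite_iff_infinite.mp fun _ => hx ?_
    have hfin :
        (⟨x, mem_sup_right (mem_zpowers x)⟩ : U) ∈ (H.subgroupOf U ⊔ commutator U).isolator :=
      mem_isolator_iff_isOfFinOrder.mpr (isOfFinOrder_of_finite _)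
    exact hG.mem_isolator_of_mem_isolator_sup_commutator
      ((mem_isolator_subgroupOf_sup_commutator_iff le_sup_left).mp hfin)
end
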